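/- Let E be a directed graph, c an exclusive cycle, v ∈ c⁰, and X the set of reduced elements pq* (r(p) = r(q) ∈ c⁰, s(q) = v, red(pq*) = pq*). Define X_w = {pq* ∈ X : s(p) = w} for vertices w, X_e = {pq* ∈ X : pq* = red(e r s*) for some e r s* ∈ Y} for edges e, and σ_e : X_{r(e)} → X_e by pq* ↦ red(e p q*). Then X with these data is a branching system: the X_w are pairwise disjoint, the X_e are pairwise disjoint, X_e ⊆ X_{s(e)}, each σ_e is a bijection, and X_w = ⋃_{e ∈ s⁻¹(w)} X_e for every non-sink vertex w (so the system is perfect); moreover X = ⋃_{w ∈ E⁰} X_w (saturated) and deg(σ_e(x)) = deg(x) + 1 (graded). -/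
import Mathlib


/-- A directed graph with vertex set `V`, edge set `E`, source map `s` and range map `r`. -/
structure DiGraph where
  V : Type
  E : Type
  s : E → V
  r : E → V

namespace DiGraph

variable (G : DiGraph)

/-- There is an edge from `u` to `w`. -/
def Step (u w : G.V) : Prop := ∃ e : G.E, G.s e = u ∧ G.r e = w

/-- `G.Reach u w` means `u ≥ w`: there is a (possibly trivial) directed path from `u` to `w`. -/
def Reach (u w : G.V) : Prop := Relation.ReflTransGen G.Step u w

/-- The root `R(W)` of a set of vertices `W`. -/
def root (W : Set G.V) : Set G.V := {u | ∃ w ∈ W, G.Reach u w}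

/-- A set `H` of vertices is hereditary if `u ∈ H` and `u ≥ w` imply `w ∈ H`. -/
def Hereditary (H : Set G.V) : Prop := ∀ u ∈ H, ∀ w, G.Reach u w → w ∈ H

/-- A vertex is regular if it emits at least one and only finitely many edges. -/
def Regular (v : G.V) : Prop := (G.s ⁻¹' {v}).Nonempty ∧ (G.s ⁻¹' {v}).Finite

/-- A set `H` is saturated if every regular vertex all of whose out-edges
have ranges in `H` lies in `H`. -/
def Saturated (H : Set G.V) : Prop :=
  ∀ v, G.Regular v → (∀ e, G.s e = v → G.r e ∈ H) → v ∈ H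

/-- A set of vertices is downwards directed if every two of its elements have a
common lower bound in it. -/
def DownDirected (W : Set G.V) : Prop :=
  ∀ u ∈ W, ∀ v ∈ W, ∃ w ∈ W, G.Reach u w ∧ G.Reach v w

/-- The Countable Separation Property of a set of vertices. -/
def CSP (W : Set G.V) : Prop := ∃ C : Set G.V, C.Countable ∧ W ⊆ G.root C

/-- The Inner Countable Separation Property of a set of vertices. -/
def ICSP (W : Set G.V) : Prop := ∃ C : Set G.V, C.Countable ∧ C ⊆ W ∧ W ⊆ G.root C

/-- `G.IsPathFrom v l` : the list of edges `l` forms a directed path starting at `v`. -/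
def IsPathFrom : (G : DiGraph) → G.V → List G.E → Prop
  | _, _, [] => True
  | G, v, e :: es => G.s e = v ∧ G.IsPathFrom (G.r e) es

/-- The end (range) vertex of a path `l` starting at `v`. -/
def pathEnd : (G : DiGraph) → G.V → List G.E → G.V
  | _, v, [] => v
  | G, _, e :: es => G.pathEnd (G.r e) es

/-- The set of vertices on a path `l` starting at `v`. -/
def pathVerts (v : G.V) (l : List G.E) : Set G.V := insert v {w | ∃ e ∈ l, G.r e = w}

/-- A cycle based at `v` : a nonempty closed path in which distinct edges have
distinct sources. -/
def IsCycle (v : G.V) (l : List G.E) : Prop :=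
  l ≠ [] ∧ G.IsPathFrom v l ∧ G.pathEnd v l = v ∧ (l.map G.s).Nodup

/-- A cycle is exclusive if no vertex on it is the base of a cycle distinct from it
(cycles being identified with their sets of edges). -/
def ExclusiveCycle (v : G.V) (l : List G.E) : Prop :=
  G.IsCycle v l ∧ ∀ u ∈ G.pathVerts v l, ∀ m, G.IsCycle u m → (∀ e, e ∈ m ↔ e ∈ l)

open Classical in
/-- Auxiliary reduction on reversed edge lists: cancel common initial segments. -/
noncomputable def redAux (G : DiGraph) : List G.E → List G.E → List G.E × List G.E
  | a :: as, b :: bs => if a = b then redAux G as bs else (a :: as, b :: bs)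
  | as, bs => (as, bs)

/-- The reduction function: `red (p, q)` cancels the common final edges of the
paths `p` and `q`, implementing `red(ee*q*) = q*` and `red(pee*q*) = red(pq*)`. -/
noncomputable def red (p q : List G.E) : List G.E × List G.E :=
  ((G.redAux p.reverse q.reverse).1.reverse, (G.redAux p.reverse q.reverse).2.reverse)

/-- The source vertex of an element `pq*` (with `q` a path starting at the base
vertex `v`): the source of `p` if `p` is nonempty, and `r(q)` otherwise. -/
def startVtx (v : G.V) : List G.E × List G.E → G.V
  | ([], q) => G.pathEnd v q
  | (e :: _, _) => G.s e

/-- Membership in the set `Y` associated to a cycle `c` (based at `cv`, with edges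
`cl`) and a vertex `v ∈ c⁰`: pairs `(p, q)` of paths with `r(p) = r(q) ∈ c⁰` and
`s(q) = v`. -/
def MemY (cv : G.V) (cl : List G.E) (v : G.V) (x : List G.E × List G.E) : Prop :=
  G.IsPathFrom (G.startVtx v x) x.1 ∧ G.IsPathFrom v x.2 ∧
    G.pathEnd (G.startVtx v x) x.1 = G.pathEnd v x.2 ∧
    G.pathEnd v x.2 ∈ G.pathVerts cv cl

/-- The degree `|p| − |q|` of an element `pq*`. -/
def degOf (G : DiGraph) (x : List G.E × List G.E) : ℤ :=
  (x.1.length : ℤ) - (x.2.length : ℤ)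

/-- The branching system `X`: reduced elements of `Y`. -/
def Xset (cv : G.V) (cl : List G.E) (v : G.V) : Set (List G.E × List G.E) :=
  {x | G.MemY cv cl v x ∧ G.red x.1 x.2 = x}

/-- The subset `X_w` of `X` of elements with source vertex `w`. -/
def Xvtx (cv : G.V) (cl : List G.E) (v : G.V) (w : G.V) : Set (List G.E × List G.E) :=
  {x ∈ G.Xset cv cl v | G.startVtx v x = w}

/-- The subset `X_e` of `X` of elements of the form `red(e r s*)` with `e r s* ∈ Y`. -/
def Xedge (cv : G.V) (cl : List G.E) (v : G.V) (e : G.E) : Set (List G.E × List G.E) :=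
  {x | ∃ rs : List G.E × List G.E, G.MemY cv cl v (e :: rs.1, rs.2) ∧
    x = G.red (e :: rs.1) rs.2}

/-- The map `σ_e : X_{r(e)} → X_e`, `pq* ↦ red(e p q*)`. -/
noncomputable def sigmaE (e : G.E) (x : List G.E × List G.E) : List G.E × List G.E :=
  G.red (e :: x.1) x.2


/-! ### Unfolding lemmas -/

lemma isPathFrom_nil (u : G.V) : G.IsPathFrom u [] := by
  rw [IsPathFrom]
  trivial

lemma isPathFrom_cons (u : G.V) (e : G.E) (L : List G.E) :
    G.IsPathFrom u (e :: L) ↔ G.s e = u ∧ G.IsPathFrom (G.r e) L := by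
  rw [IsPathFrom]

lemma pathEnd_nil (u : G.V) : G.pathEnd u [] = u := by
  rw [pathEnd]

lemma pathEnd_cons (u : G.V) (e : G.E) (L : List G.E) :
    G.pathEnd u (e :: L) = G.pathEnd (G.r e) L := by
  rw [pathEnd]

lemma pathEnd_singleton (u : G.V) (e : G.E) : G.pathEnd u [e] = G.r e := by
  rw [pathEnd_cons, pathEnd_nil]

/-! ### Path lemmas -/

lemma pathEnd_append (u : G.V) (L1 L2 : List G.E) :
    G.pathEnd u (L1 ++ L2) = G.pathEnd (G.pathEnd u L1) L2 := by
  induction L1 generalizing u with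
  | nil => simp [pathEnd]
  | cons a as ih => simpa [pathEnd] using ih (G.r a)

lemma isPathFrom_append (u : G.V) (L1 L2 : List G.E) :
    G.IsPathFrom u (L1 ++ L2) ↔ G.IsPathFrom u L1 ∧ G.IsPathFrom (G.pathEnd u L1) L2 := by
  induction L1 generalizing u with
  | nil => simp [IsPathFrom, pathEnd]
  | cons a as ih =>
    simp only [List.cons_append, IsPathFrom, pathEnd, ih, and_assoc]

lemma src_head {u : G.V} {a : G.E} {L : List G.E} (h : G.IsPathFrom u (a :: L)) :
    G.s a = u := by
  rw [IsPathFrom] at h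
  exact h.1

lemma pathEnd_split {u : G.V} {M1 : List G.E} {a : G.E} {M2 : List G.E}
    (h : G.IsPathFrom u (M1 ++ a :: M2)) : G.pathEnd u M1 = G.s a := by
  have h2 := ((G.isPathFrom_append u M1 (a :: M2)).1 h).2
  exact (G.src_head h2).symm

/-! ### redAux lemmas -/

lemma redAux_nil_left (w : List G.E) : G.redAux [] w = ([], w) := by
  cases w <;> rfl

lemma redAux_nil_right (u : List G.E) : G.redAux u [] = (u, []) := by
  cases u <;> rfl

open Classical in
lemma redAux_cons (a b : G.E) (as bs : List G.E) :
    G.redAux (a :: as) (b :: bs) = if a = b then G.redAux as bs else (a :: as, b :: bs) := by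
  rfl

lemma redAux_cons_eq (a : G.E) (as bs : List G.E) :
    G.redAux (a :: as) (a :: bs) = G.redAux as bs := by
  rw [redAux_cons, if_pos rfl]

lemma redAux_cons_ne {a b : G.E} (h : a ≠ b) (as bs : List G.E) :
    G.redAux (a :: as) (b :: bs) = (a :: as, b :: bs) := by
  rw [redAux_cons, if_neg h]

/-- A pair of lists is `redAux`-reduced: one is empty or the heads differ. -/
def RedP (u w : List G.E) : Prop := u = [] ∨ w = [] ∨ u.head? ≠ w.head?

lemma redAux_of_redP {u w : List G.E} (h : G.RedP u w) : G.redAux u w = (u, w) := by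
  match u, w with
  | [], w => exact G.redAux_nil_left w
  | u, [] => exact G.redAux_nil_right u
  | a :: as, b :: bs =>
    have hab : a ≠ b := by
      rcases h with h | h | h
      · simp at h
      · simp at h
      · simpa using h
    exact G.redAux_cons_ne hab as bs

lemma redAux_spec (u w : List G.E) :
    ∃ t, u = t ++ (G.redAux u w).1 ∧ w = t ++ (G.redAux u w).2 ∧
      G.RedP (G.redAux u w).1 (G.redAux u w).2 := by
  induction u generalizing w with
  | nil =>
    refine ⟨[], ?_⟩
    rw [G.redAux_nil_left]
    exact ⟨rfl, rfl, Or.inl rfl⟩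
  | cons a as ih =>
    cases w with
    | nil =>
      refine ⟨[], ?_⟩
      rw [G.redAux_nil_right]
      exact ⟨rfl, rfl, Or.inr (Or.inl rfl)⟩
    | cons b bs =>
      by_cases hab : a = b
      · subst hab
        obtain ⟨t, h1, h2, h3⟩ := ih bs
        rw [G.redAux_cons_eq]
        exact ⟨a :: t, by simpa using h1, by simpa using h2, h3⟩
      · refine ⟨[], ?_⟩
        rw [G.redAux_cons_ne hab]
        exact ⟨rfl, rfl, Or.inr (Or.inr (by simpa using hab))⟩

open Classical in
lemma redAux_append (u w x : List G.E) :
    G.redAux (u ++ x) w =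
      if (G.redAux u w).1 = [] then G.redAux x (G.redAux u w).2
      else ((G.redAux u w).1 ++ x, (G.redAux u w).2) := by
  induction u generalizing w with
  | nil => simp [G.redAux_nil_left]
  | cons a as ih =>
    cases w with
    | nil =>
      rw [G.redAux_nil_right]
      simp [G.redAux_nil_right]
    | cons b bs =>
      by_cases hab : a = b
      · subst hab
        rw [List.cons_append, G.redAux_cons_eq, G.redAux_cons_eq, ih bs]
      · rw [List.cons_append, G.redAux_cons_ne hab, G.redAux_cons_ne hab]
        simp

lemma redAux_length (u w : List G.E) :
    ((G.redAux u w).1.length : ℤ) - (G.redAux u w).2.length = u.length - w.length := by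
  induction u generalizing w with
  | nil => rw [G.redAux_nil_left]
  | cons a as ih =>
    cases w with
    | nil => rw [G.redAux_nil_right]
    | cons b bs =>
      by_cases hab : a = b
      · subst hab
        rw [G.redAux_cons_eq]
        have := ih bs
        simp only [List.length_cons]
        push_cast
        omega
      · rw [G.redAux_cons_ne hab]

/-! ### red lemmas -/

/-- A pair of lists is reduced: one is empty or the last edges differ. -/
def RedL (p q : List G.E) : Prop := p = [] ∨ q = [] ∨ p.getLast? ≠ q.getLast?

lemma redP_reverse_iff (p q : List G.E) : G.RedP p.reverse q.reverse ↔ G.RedL p q := by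
  unfold RedP RedL
  simp [List.head?_reverse]

lemma red_spec (p q : List G.E) :
    ∃ t, p = (G.red p q).1 ++ t ∧ q = (G.red p q).2 ++ t ∧
      G.RedL (G.red p q).1 (G.red p q).2 := by
  obtain ⟨t, h1, h2, h3⟩ := G.redAux_spec p.reverse q.reverse
  refine ⟨t.reverse, ?_, ?_, ?_⟩
  · conv_lhs => rw [← p.reverse_reverse, h1]
    simp [red]
  · conv_lhs => rw [← q.reverse_reverse, h2]
    simp [red]
  · rw [← G.redP_reverse_iff]
    simpa [red] using h3

lemma red_of_redL {p q : List G.E} (h : G.RedL p q) : G.red p q = (p, q) := by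
  have := G.redAux_of_redP ((G.redP_reverse_iff p q).2 h)
  simp [red, this]

lemma red_red (p q : List G.E) :
    G.red (G.red p q).1 (G.red p q).2 = G.red p q := by
  obtain ⟨t, _, _, h3⟩ := G.red_spec p q
  rw [G.red_of_redL h3]

lemma redL_of_red_eq {p q : List G.E} (h : G.red p q = (p, q)) : G.RedL p q := by
  obtain ⟨t, _, _, h3⟩ := G.red_spec p q
  rwa [h] at h3

lemma red_cons (a : G.E) (p q : List G.E) :
    G.red (a :: p) q = G.red (a :: (G.red p q).1) (G.red p q).2 := by
  obtain ⟨t, _, _, h3⟩ := G.redAux_spec p.reverse q.reverse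
  have fix : G.redAux (G.redAux p.reverse q.reverse).1 (G.redAux p.reverse q.reverse).2
      = ((G.redAux p.reverse q.reverse).1, (G.redAux p.reverse q.reverse).2) :=
    G.redAux_of_redP h3
  simp only [red, List.reverse_cons, List.reverse_reverse]
  rw [G.redAux_append, G.redAux_append, fix]

lemma red_length (p q : List G.E) :
    ((G.red p q).1.length : ℤ) - (G.red p q).2.length = p.length - q.length := by
  have := G.redAux_length p.reverse q.reverse
  simpa [red] using this

lemma red_singleton_cancel (e : G.E) (q : List G.E) :
    G.red [e] (q ++ [e]) = ([], q) := by
  simp [red, List.reverse_append, G.redAux_cons_eq, G.redAux_nil_left]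

/-! ### Cycle lemmas -/

lemma mem_pathVerts_base (v : G.V) (l : List G.E) : v ∈ G.pathVerts v l :=
  Or.inl rfl

lemma mem_pathVerts_of_mem {e : G.E} {l : List G.E} (v : G.V) (h : e ∈ l) :
    G.r e ∈ G.pathVerts v l :=
  Or.inr ⟨e, h, rfl⟩

lemma exists_dup_split {M : List G.E} (h : ¬ (M.map G.s).Nodup) :
    ∃ M1 a M2 b M3, M = M1 ++ a :: M2 ++ b :: M3 ∧ G.s a = G.s b := by
  induction M with
  | nil => simp at h
  | cons x M ih =>
    rw [List.map_cons, List.nodup_cons] at h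
    push_neg at h
    by_cases hx : G.s x ∈ M.map G.s
    · obtain ⟨b, hb, hsb⟩ := List.mem_map.1 hx
      obtain ⟨M2, M3, rfl⟩ := List.append_of_mem hb
      exact ⟨[], x, M2, b, M3, rfl, hsb.symm⟩
    · obtain ⟨M1, a, M2, b, M3, hM, hs⟩ := ih (fun hn => h hx hn)
      exact ⟨x :: M1, a, M2, b, M3, by rw [hM]; rfl, hs⟩

lemma exists_cycle_of_closed (n : ℕ) :
    ∀ (M : List G.E) (v : G.V) (e : G.E), M.length ≤ n → M.head? = some e →
      G.IsPathFrom v M → G.pathEnd v M = v → ∃ m, G.IsCycle v m ∧ e ∈ m := by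
  induction n with
  | zero =>
    intro M v e hlen hhd _ _
    cases M with
    | nil => simp at hhd
    | cons a M => simp at hlen
  | succ n ih =>
    intro M v e hlen hhd hpath hend
    by_cases hnd : (M.map G.s).Nodup
    · have hM : M ≠ [] := by rintro rfl; simp at hhd
      refine ⟨M, ⟨hM, hpath, hend, hnd⟩, ?_⟩
      cases M with
      | nil => simp at hhd
      | cons a M => simp at hhd; simp [hhd]
    · obtain ⟨M1, a, M2, b, M3, hM, hs⟩ := G.exists_dup_split hnd
      subst hM
      have hpath1 : G.IsPathFrom v (M1 ++ a :: (M2 ++ b :: M3)) := by simpa using hpath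
      have hsa : G.pathEnd v M1 = G.s a := G.pathEnd_split hpath1
      have hsb : G.pathEnd v (M1 ++ a :: M2) = G.s b := by
        have : M1 ++ a :: M2 ++ b :: M3 = (M1 ++ a :: M2) ++ b :: M3 := by simp
        rw [this] at hpath
        exact G.pathEnd_split hpath
      cases M1 with
      | nil =>
        -- a is first; s a = v; the prefix a :: M2 is closed at v
        have hsa' : G.s a = v := by simpa [pathEnd] using hsa.symm
        obtain rfl : e = a := by simpa using hhd.symm
        have hpath' : G.IsPathFrom v (e :: M2) := by
          have := (G.isPathFrom_append v (e :: M2) (b :: M3)).1 (by simpa using hpath)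
          exact this.1
        have hend' : G.pathEnd v (e :: M2) = v := by
          have : G.pathEnd v ([] ++ e :: M2) = G.s b := hsb
          simp only [List.nil_append] at this
          rw [this, hs.symm, hsa']
        have hlen' : (e :: M2).length ≤ n := by
          simp only [List.nil_append] at hlen
          simp at hlen ⊢
          omega
        obtain ⟨m, hm, hem⟩ := ih (e :: M2) v e hlen' (by simp) hpath' hend'
        exact ⟨m, hm, hem⟩
      | cons f M1' =>
        -- drop the loop a :: M2, keep M1 ++ b :: M3
        obtain rfl : e = f := by simpa using hhd.symm
        have hp0 : G.IsPathFrom v ((e :: M1') ++ a :: M2) :=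
          ((G.isPathFrom_append v _ _).1 hpath).1
        have hp1 : G.IsPathFrom v (e :: M1') :=
          ((G.isPathFrom_append v (e :: M1') (a :: M2)).1 hp0).1
        have hp2 : G.IsPathFrom (G.s b) (b :: M3) := by
          have h2 := ((G.isPathFrom_append v _ _).1 hpath).2
          rwa [hsb] at h2
        have hpath' : G.IsPathFrom v ((e :: M1') ++ b :: M3) := by
          rw [G.isPathFrom_append]
          refine ⟨hp1, ?_⟩
          rw [hsa, hs]
          exact hp2
        have hend' : G.pathEnd v ((e :: M1') ++ b :: M3) = v := by
          rw [G.pathEnd_append, hsa, hs]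
          rw [G.pathEnd_append, hsb] at hend
          exact hend
        have hlen' : ((e :: M1') ++ b :: M3).length ≤ n := by
          simp at hlen ⊢
          omega
        exact ih _ v e hlen' (by simp) hpath' hend'

/-- From any vertex on a cycle there is a path to the base vertex. -/
lemma cycle_path_to_base {cv : G.V} {cl : List G.E} (hc : G.IsCycle cv cl)
    {u : G.V} (hu : u ∈ G.pathVerts cv cl) :
    ∃ P, G.IsPathFrom u P ∧ G.pathEnd u P = cv := by
  rcases hu with rfl | ⟨e, he, rfl⟩
  · exact ⟨[], G.isPathFrom_nil _, G.pathEnd_nil _⟩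
  · obtain ⟨cl1, cl2, rfl⟩ := List.append_of_mem he
    refine ⟨cl2, ?_, ?_⟩
    · have := ((G.isPathFrom_append cv cl1 (e :: cl2)).1 hc.2.1).2
      rw [IsPathFrom] at this
      exact this.2
    · have := hc.2.2.1
      rw [G.pathEnd_append] at this
      simpa [pathEnd] using this

/-- From the base vertex there is a path to any vertex on the cycle. -/
lemma cycle_path_from_base {cv : G.V} {cl : List G.E} (hc : G.IsCycle cv cl)
    {w : G.V} (hw : w ∈ G.pathVerts cv cl) :
    ∃ P, G.IsPathFrom cv P ∧ G.pathEnd cv P = w := by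
  rcases hw with rfl | ⟨e, he, rfl⟩
  · exact ⟨[], G.isPathFrom_nil _, G.pathEnd_nil _⟩
  · obtain ⟨cl1, cl2, rfl⟩ := List.append_of_mem he
    refine ⟨cl1 ++ [e], ?_, ?_⟩
    · rw [G.isPathFrom_append]
      have h1 := ((G.isPathFrom_append cv cl1 (e :: cl2)).1 hc.2.1).1
      have h2 := ((G.isPathFrom_append cv cl1 (e :: cl2)).1 hc.2.1).2
      rw [IsPathFrom] at h2
      rw [G.isPathFrom_cons]
      exact ⟨h1, h2.1, G.isPathFrom_nil _⟩
    · rw [G.pathEnd_append, G.pathEnd_singleton]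

/-- Between any two vertices on a cycle there is a path. -/
lemma cycle_path {cv : G.V} {cl : List G.E} (hc : G.IsCycle cv cl)
    {u w : G.V} (hu : u ∈ G.pathVerts cv cl) (hw : w ∈ G.pathVerts cv cl) :
    ∃ P, G.IsPathFrom u P ∧ G.pathEnd u P = w := by
  obtain ⟨P1, h1, h2⟩ := G.cycle_path_to_base hc hu
  obtain ⟨P2, h3, h4⟩ := G.cycle_path_from_base hc hw
  refine ⟨P1 ++ P2, ?_, ?_⟩
  · rw [G.isPathFrom_append, h2]
    exact ⟨h1, h3⟩
  · rw [G.pathEnd_append, h2, h4]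

/-- Key exclusivity lemma: an edge leaving a cycle vertex and starting a path that
returns to the cycle must be a cycle edge. -/
lemma edge_mem_cl {cv : G.V} {cl : List G.E} (hc : G.ExclusiveCycle cv cl)
    {v : G.V} (hv : v ∈ G.pathVerts cv cl) {e : G.E} {L : List G.E}
    (hp : G.IsPathFrom v (e :: L)) (hE : G.pathEnd v (e :: L) ∈ G.pathVerts cv cl) :
    e ∈ cl := by
  obtain ⟨P, hP1, hP2⟩ := G.cycle_path hc.1 hE hv
  have hpath : G.IsPathFrom v ((e :: L) ++ P) := by
    rw [G.isPathFrom_append]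
    exact ⟨hp, hP1⟩
  have hend : G.pathEnd v ((e :: L) ++ P) = v := by
    rw [G.pathEnd_append, hP2]
  obtain ⟨m, hm, hem⟩ := G.exists_cycle_of_closed ((e :: L) ++ P).length _ v e le_rfl
    (by simp) hpath hend
  exact (hc.2 v hv m hm e).1 hem

/-- Every vertex along a path between cycle vertices lies on the cycle. -/
lemma pathEnd_prefix_mem {cv : G.V} {cl : List G.E} (hc : G.ExclusiveCycle cv cl) :
    ∀ (q1 q2 : List G.E) (v : G.V), v ∈ G.pathVerts cv cl →
      G.IsPathFrom v (q1 ++ q2) → G.pathEnd v (q1 ++ q2) ∈ G.pathVerts cv cl →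
      G.pathEnd v q1 ∈ G.pathVerts cv cl := by
  intro q1
  induction q1 with
  | nil => intro q2 v hv _ _; rw [G.pathEnd_nil]; exact hv
  | cons f q1' ih =>
    intro q2 v hv hp hE
    have hf : f ∈ cl := G.edge_mem_cl hc hv (by simpa using hp) (by simpa using hE)
    have hrf : G.r f ∈ G.pathVerts cv cl := G.mem_pathVerts_of_mem cv hf
    rw [List.cons_append, G.isPathFrom_cons] at hp
    rw [List.cons_append, G.pathEnd_cons] at hE
    rw [G.pathEnd_cons]
    exact ih q2 (G.r f) hrf hp.2 hE

/-- Every edge along a path between cycle vertices is a cycle edge. -/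
lemma edges_mem_cl {cv : G.V} {cl : List G.E} (hc : G.ExclusiveCycle cv cl) :
    ∀ (q : List G.E) (v : G.V), v ∈ G.pathVerts cv cl →
      G.IsPathFrom v q → G.pathEnd v q ∈ G.pathVerts cv cl →
      ∀ e ∈ q, e ∈ cl := by
  intro q
  induction q with
  | nil => intro v _ _ _ e he; simp at he
  | cons f q' ih =>
    intro v hv hp hE e he
    have hf : f ∈ cl := G.edge_mem_cl hc hv hp hE
    rcases List.mem_cons.1 he with rfl | he'
    · exact hf
    · have hrf : G.r f ∈ G.pathVerts cv cl := G.mem_pathVerts_of_mem cv hf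
      rw [G.isPathFrom_cons] at hp
      rw [G.pathEnd_cons] at hE
      exact ih (G.r f) hrf hp.2 hE e he'

/-- Every vertex on a cycle emits a cycle edge. -/
lemma cycle_exists_edge_from {cv : G.V} {cl : List G.E} (hc : G.IsCycle cv cl)
    {w : G.V} (hw : w ∈ G.pathVerts cv cl) : ∃ e ∈ cl, G.s e = w := by
  have hbase : ∃ e ∈ cl, G.s e = cv := by
    cases h : cl with
    | nil => exact absurd h hc.1
    | cons f cl' =>
      have := hc.2.1
      rw [h, IsPathFrom] at this
      exact ⟨f, by simp, this.1⟩
  rcases hw with rfl | ⟨e0, he0, rfl⟩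
  · exact hbase
  · obtain ⟨cl1, cl2, hcl⟩ := List.append_of_mem he0
    cases cl2 with
    | nil =>
      have hend : G.pathEnd cv cl = G.r e0 := by
        rw [hcl, G.pathEnd_append, G.pathEnd_singleton]
      rw [hc.2.2.1] at hend
      rw [← hend]
      exact hbase
    | cons f cl2' =>
      have hp := hc.2.1
      rw [hcl] at hp
      have h2 := ((G.isPathFrom_append cv cl1 _).1 hp).2
      rw [IsPathFrom] at h2
      have h3 := h2.2
      rw [IsPathFrom] at h3
      exact ⟨f, by rw [hcl]; simp, h3.1⟩

lemma cl_src_inj {cv : G.V} {cl : List G.E} (hc : G.IsCycle cv cl)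
    {e e' : G.E} (he : e ∈ cl) (he' : e' ∈ cl) (hs : G.s e = G.s e') : e = e' :=
  List.inj_on_of_nodup_map hc.2.2.2 he he' hs

/-! ### startVtx and MemY lemmas -/

lemma startVtx_nil (v : G.V) (q : List G.E) :
    G.startVtx v ([], q) = G.pathEnd v q := by rw [startVtx]

lemma startVtx_cons (v : G.V) (e : G.E) (p q : List G.E) :
    G.startVtx v (e :: p, q) = G.s e := by rw [startVtx]

lemma memY_of_cons {cv v : G.V} {cl : List G.E} {e : G.E} {r s' : List G.E}
    (h : G.MemY cv cl v (e :: r, s')) :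
    G.MemY cv cl v (r, s') ∧ G.startVtx v (r, s') = G.r e := by
  obtain ⟨h1, h2, h3, h4⟩ := h
  rw [G.startVtx_cons] at h1 h3
  rw [G.isPathFrom_cons] at h1
  rw [G.pathEnd_cons] at h3
  have hsv : G.startVtx v (r, s') = G.r e := by
    cases r with
    | nil => rw [G.startVtx_nil, ← h3, G.pathEnd_nil]
    | cons a r' => rw [G.startVtx_cons]; exact G.src_head h1.2
  refine ⟨⟨?_, h2, ?_, h4⟩, hsv⟩
  · rw [hsv]; exact h1.2
  · rw [hsv]; exact h3

lemma memY_cons {cv v : G.V} {cl : List G.E} (e : G.E) {x : List G.E × List G.E}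
    (h : G.MemY cv cl v x) (hsv : G.startVtx v x = G.r e) :
    G.MemY cv cl v (e :: x.1, x.2) := by
  obtain ⟨h1, h2, h3, h4⟩ := h
  rw [hsv] at h1 h3
  refine ⟨?_, h2, ?_, h4⟩
  · rw [G.startVtx_cons, G.isPathFrom_cons]; exact ⟨rfl, h1⟩
  · rw [G.startVtx_cons, G.pathEnd_cons]; exact h3

/-- Key lemma: the reduction of an element of `Y` lies in `X`, with the same
source vertex. -/
lemma red_mem_Xvtx {cv v : G.V} {cl : List G.E} (hc : G.ExclusiveCycle cv cl)
    (hv : v ∈ G.pathVerts cv cl) {p q : List G.E} (h : G.MemY cv cl v (p, q)) :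
    G.red p q ∈ G.Xvtx cv cl v (G.startVtx v (p, q)) := by
  obtain ⟨t, hp, hq, hL⟩ := G.red_spec p q
  obtain ⟨h1, h2, h3, h4⟩ := h
  set y1 := (G.red p q).1 with hy1def
  set y2 := (G.red p q).2 with hy2def
  have hpair : G.red p q = (y1, y2) := Prod.mk.eta.symm
  have hq' : G.IsPathFrom v (y2 ++ t) := by rw [← hq]; exact h2
  have hq2 : G.IsPathFrom v y2 := ((G.isPathFrom_append v y2 t).1 hq').1
  have hqt : G.IsPathFrom (G.pathEnd v y2) t := ((G.isPathFrom_append v y2 t).1 hq').2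
  have hC2 : G.pathEnd v y2 ∈ G.pathVerts cv cl := by
    refine G.pathEnd_prefix_mem hc y2 t v hv hq' ?_
    rw [← hq]; exact h4
  have hp' : G.IsPathFrom (G.startVtx v (p, q)) (y1 ++ t) := by rw [← hp]; exact h1
  have hp1 : G.IsPathFrom (G.startVtx v (p, q)) y1 :=
    ((G.isPathFrom_append _ y1 t).1 hp').1
  have factM : G.pathEnd (G.startVtx v (p, q)) y1 = G.pathEnd v y2 := by
    cases t with
    | nil =>
      have hp0 : p = y1 := by simpa using hp
      have hq0 : q = y2 := by simpa using hq
      rw [← hp0, ← hq0]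
      exact h3
    | cons f t' =>
      have e1 : G.s f = G.pathEnd (G.startVtx v (p, q)) y1 :=
        G.src_head (((G.isPathFrom_append _ y1 (f :: t')).1 hp').2)
      have e2 : G.s f = G.pathEnd v y2 := G.src_head hqt
      rw [← e1, e2]
  have factS : G.startVtx v (p, q) = G.startVtx v (y1, y2) := by
    cases hy1 : y1 with
    | nil =>
      rw [G.startVtx_nil]
      rw [hy1] at hp
      simp only [List.nil_append] at hp
      cases t with
      | nil =>
        subst hp
        have hq0 : q = y2 := by simpa using hq
        rw [← hq0, G.startVtx_nil]
      | cons f t' =>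
        subst hp
        rw [G.startVtx_cons]
        exact G.src_head hqt
    | cons a l =>
      rw [hy1] at hp
      rw [hp, G.startVtx_cons, List.cons_append, G.startVtx_cons]
  rw [hpair, factS]
  refine ⟨⟨⟨?_, hq2, ?_, hC2⟩, ?_⟩, rfl⟩
  · rw [← factS]; exact hp1
  · rw [← factS]; exact factM
  · rw [← hpair]
    exact (G.red_red p q).trans hpair

/-! ### Computations of `red` on singletons -/

lemma red_singleton_ncancel {e : G.E} {q : List G.E} (h : q.getLast? ≠ some e) :
    G.red [e] q = ([e], q) := by
  refine G.red_of_redL (Or.inr (Or.inr ?_))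
  simpa using (Ne.symm h)

/-- Case analysis for injectivity of `σ_e`. -/
lemma sigma_inj_aux (e : G.E) (p q : List G.E) (hred : G.RedL p q) :
    ((G.red (e :: p) q).1 = e :: p ∧ (G.red (e :: p) q).2 = q) ∨
    (p = [] ∧ (G.red (e :: p) q).1 = [] ∧ q = (G.red (e :: p) q).2 ++ [e]) := by
  obtain ⟨t, h1, h2, _⟩ := G.red_spec (e :: p) q
  rcases List.eq_nil_or_concat t with rfl | ⟨t'', d, rfl⟩
  · left
    exact ⟨by simpa using h1.symm, by simpa using h2.symm⟩
  · right
    rw [List.concat_eq_append] at h1 h2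
    have hlast1 : (e :: p).getLast? = some d := by
      rw [h1, ← List.append_assoc, List.getLast?_concat]
    have hlast2 : q.getLast? = some d := by
      rw [h2, ← List.append_assoc, List.getLast?_concat]
    have hp0 : p = [] := by
      rcases hred with rfl | hq0 | hgl
      · rfl
      · rw [hq0] at hlast2; simp at hlast2
      · cases p with
        | nil => rfl
        | cons a p'' =>
          exfalso
          apply hgl
          rw [List.getLast?_cons_cons] at hlast1
          rw [hlast1, hlast2]
    subst hp0
    have hlen := congrArg List.length h1
    simp [List.length_append] at hlen
    have hy1' : (G.red [e] q).1 = [] := List.length_eq_zero_iff.1 (by omega)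
    have ht''' : t'' = [] := List.length_eq_zero_iff.1 (by omega)
    subst ht'''
    have hd : d = e := by
      rw [hy1'] at h1
      simpa using h1.symm
    subst hd
    exact ⟨rfl, hy1', by simpa using h2⟩

/-- The edge label of an element of `X_e` is determined by the element. -/
lemma xedge_det {cv v : G.V} {cl : List G.E} (hc : G.ExclusiveCycle cv cl)
    (hv : v ∈ G.pathVerts cv cl) {e : G.E} {x : List G.E × List G.E}
    (hx : x ∈ G.Xedge cv cl v e) :
    (x.1 ≠ [] → x.1.head? = some e) ∧
    (x.1 = [] → e ∈ cl ∧ G.s e = G.pathEnd v x.2) := by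
  obtain ⟨rs, hm, hxe⟩ := hx
  obtain ⟨t, h1, h2, _⟩ := G.red_spec (e :: rs.1) rs.2
  rw [← hxe] at h1 h2
  constructor
  · intro hne
    cases hx1 : x.1 with
    | nil => exact absurd hx1 hne
    | cons a l =>
      rw [hx1] at h1
      rw [List.cons_append] at h1
      have h1' := List.cons.inj h1
      rw [List.head?_cons, h1'.1]
  · intro hx1
    rw [hx1] at h1
    simp only [List.nil_append] at h1
    rw [← h1] at h2
    obtain ⟨hm1, hm2, hm3, hm4⟩ := hm
    have hecl : e ∈ cl := by
      refine G.edges_mem_cl hc rs.2 v hv hm2 hm4 e ?_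
      rw [h2]
      simp
    have hse : G.pathEnd v x.2 = G.s e := by
      rw [h2] at hm2
      exact G.pathEnd_split hm2
    exact ⟨hecl, hse.symm⟩

/-- `X` with the subsets `X_w`, `X_e` and the maps `σ_e` is a perfect, saturated and
graded branching system. -/
theorem Xset_branching_system (G : DiGraph) (cv : G.V) (cl : List G.E)
    (hc : G.ExclusiveCycle cv cl) (v : G.V) (hv : v ∈ G.pathVerts cv cl) :
    (∀ w w' : G.V, w ≠ w' → Disjoint (G.Xvtx cv cl v w) (G.Xvtx cv cl v w')) ∧
    (∀ e e' : G.E, e ≠ e' → Disjoint (G.Xedge cv cl v e) (G.Xedge cv cl v e')) ∧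
    (∀ e : G.E, G.Xedge cv cl v e ⊆ G.Xvtx cv cl v (G.s e)) ∧
    (∀ e : G.E, Set.BijOn (G.sigmaE e) (G.Xvtx cv cl v (G.r e)) (G.Xedge cv cl v e)) ∧
    (∀ w : G.V, (∃ e, G.s e = w) →
      G.Xvtx cv cl v w = ⋃ e ∈ {e : G.E | G.s e = w}, G.Xedge cv cl v e) ∧
    (G.Xset cv cl v = ⋃ w : G.V, G.Xvtx cv cl v w) ∧
    (∀ (e : G.E) (x : List G.E × List G.E), x ∈ G.Xvtx cv cl v (G.r e) →
      G.degOf (G.sigmaE e x) = G.degOf x + 1) := by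
  have hXsub : ∀ e : G.E, G.Xedge cv cl v e ⊆ G.Xvtx cv cl v (G.s e) := by
    intro e x hx
    obtain ⟨rs, hm, hxe⟩ := hx
    have h := G.red_mem_Xvtx hc hv hm
    rw [G.startVtx_cons] at h
    rw [hxe]
    exact h
  refine ⟨?_, ?_, hXsub, ?_, ?_, ?_, ?_⟩
  · -- X_w pairwise disjoint
    intro w w' hne
    rw [Set.disjoint_left]
    intro x hx hx'
    exact hne (hx.2.symm.trans hx'.2)
  · -- X_e pairwise disjoint
    intro e e' hne
    rw [Set.disjoint_left]
    intro x hx hx'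
    obtain ⟨hd, hn⟩ := G.xedge_det hc hv hx
    obtain ⟨hd', hn'⟩ := G.xedge_det hc hv hx'
    cases hx1 : x.1 with
    | nil =>
      obtain ⟨hecl, hse⟩ := hn hx1
      obtain ⟨hecl', hse'⟩ := hn' hx1
      exact hne (G.cl_src_inj hc.1 hecl hecl' (hse.trans hse'.symm))
    | cons a l =>
      have h1 := hd (by rw [hx1]; simp)
      have h2 := hd' (by rw [hx1]; simp)
      exact hne (Option.some_inj.1 (h1.symm.trans h2))
  · -- σ_e is a bijection
    intro e
    refine ⟨?_, ?_, ?_⟩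
    · -- MapsTo
      intro x hx
      obtain ⟨⟨hmY, hredx⟩, hsv⟩ := hx
      have hmY' : G.MemY cv cl v (e :: x.1, x.2) := G.memY_cons e hmY hsv
      exact ⟨(x.1, x.2), hmY', rfl⟩
    · -- InjOn
      intro x hx y hy hxy
      obtain ⟨⟨hmx, hredx⟩, hsvx⟩ := hx
      obtain ⟨⟨hmy, hredy⟩, hsvy⟩ := hy
      have hrx : G.RedL x.1 x.2 := G.redL_of_red_eq (hredx.trans Prod.mk.eta.symm)
      have hry : G.RedL y.1 y.2 := G.redL_of_red_eq (hredy.trans Prod.mk.eta.symm)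
      have hxy' : G.red (e :: x.1) x.2 = G.red (e :: y.1) y.2 := hxy
      rcases G.sigma_inj_aux e x.1 x.2 hrx with ⟨ha1, ha2⟩ | ⟨ha0, ha1, ha2⟩ <;>
        rcases G.sigma_inj_aux e y.1 y.2 hry with ⟨hb1, hb2⟩ | ⟨hb0, hb1, hb2⟩
      · rw [hxy'] at ha1 ha2
        rw [hb1] at ha1
        rw [hb2] at ha2
        have h1' := List.cons.inj ha1
        exact Prod.ext h1'.2.symm ha2.symm
      · rw [hxy'] at ha1
        rw [hb1] at ha1
        simp at ha1
      · rw [← hxy'] at hb1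
        rw [ha1] at hb1
        simp at hb1
      · rw [hxy'] at ha2
        rw [← hb2] at ha2
        exact Prod.ext (ha0.trans hb0.symm) ha2
    · -- SurjOn
      intro x hx
      obtain ⟨rs, hm, hxe⟩ := hx
      obtain ⟨hm', hsv⟩ := G.memY_of_cons hm
      have hy := G.red_mem_Xvtx hc hv hm'
      rw [hsv] at hy
      refine ⟨G.red rs.1 rs.2, hy, ?_⟩
      show G.red (e :: (G.red rs.1 rs.2).1) (G.red rs.1 rs.2).2 = x
      rw [← G.red_cons]
      exact hxe.symm
  · -- X_w is the union of the X_e over e with source w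
    intro w _hw
    ext x
    simp only [Set.mem_iUnion, Set.mem_setOf_eq, exists_prop]
    constructor
    · rintro ⟨⟨⟨h1, h2, h3, h4⟩, hred⟩, hsv⟩
      obtain ⟨p, q⟩ := x
      cases p with
      | cons a p' =>
        refine ⟨a, ?_, (p', q), ⟨h1, h2, h3, h4⟩, hred.symm⟩
        rw [G.startVtx_cons] at hsv
        exact hsv
      | nil =>
        rw [G.startVtx_nil] at hsv h1 h3
        rw [G.pathEnd_nil] at h3
        rw [h3] at hsv
        obtain ⟨e, hecl, hse⟩ := G.cycle_exists_edge_from hc.1 (hsv ▸ h4)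
        refine ⟨e, hse, ([], q ++ [e]), ⟨?_, ?_, ?_, ?_⟩, ?_⟩
        · rw [G.startVtx_cons, G.isPathFrom_cons]
          exact ⟨rfl, G.isPathFrom_nil _⟩
        · rw [G.isPathFrom_append]
          refine ⟨h2, ?_⟩
          rw [G.isPathFrom_cons]
          exact ⟨hse.trans hsv.symm ▸ rfl, G.isPathFrom_nil _⟩
        · rw [G.startVtx_cons, G.pathEnd_singleton, G.pathEnd_append,
            G.pathEnd_singleton]
        · rw [G.pathEnd_append, G.pathEnd_singleton]
          exact G.mem_pathVerts_of_mem cv hecl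
        · rw [G.red_singleton_cancel]
    · rintro ⟨e, hse, hx⟩
      have := hXsub e hx
      rw [hse] at this
      exact this
  · -- X is the union of the X_w
    ext x
    simp only [Set.mem_iUnion]
    constructor
    · intro hx
      exact ⟨G.startVtx v x, hx, rfl⟩
    · rintro ⟨w, hx, _⟩
      exact hx
  · -- grading
    intro e x _
    show G.degOf (G.red (e :: x.1) x.2) = G.degOf x + 1
    unfold degOf
    rw [G.red_length]
    simp only [List.length_cons]
    push_cast
    ring


end DiGraph
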